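/- The improper integral ∫₀^∞ s∘exp(−tΔ) dt converges and equals s, where Δ := ds + sd is the Laplacian of an abstract Hodge decomposition. -/

import Mathlib

/-!
Since `s π = 0`, the Hodge identity gives `s Δ = s (1 - π) = s`, so `s Δⁿ = s` for all `n`.
Summing the exponential series termwise, `s exp(-tΔ) = e^{-t} s`, and `∫₀^∞ e^{-t} dt = 1`.
-/

open MeasureTheory NormedSpace Set

section LeftEigenvector

variable {𝕂 𝔸 : Type*} [RCLike 𝕂] [NormedRing 𝔸] [NormedAlgebra 𝕂 𝔸]

theorem mul_pow_eq_smul_of_mul_eq_smul {a x : 𝔸} {c : 𝕂} (h : a * x = c • a) (n : ℕ) :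
    a * x ^ n = c ^ n • a := by
  induction n with
  | zero => simp
  | succ n ih => rw [pow_succ, ← mul_assoc, ih, smul_mul_assoc, h, smul_smul, pow_succ]

theorem mul_exp_eq_smul_of_mul_eq_smul [CompleteSpace 𝔸] {a x : 𝔸} {c : 𝕂}
    (h : a * x = c • a) : a * exp x = exp c • a := by
  have hx := (exp_series_hasSum_exp' (𝕂 := 𝕂) x).mul_left a
  have hc := (exp_series_hasSum_exp' (𝕂 := 𝕂) c).smul_const a
  refine hx.unique (hc.congr_fun fun n => ?_)
  rw [mul_smul_comm, mul_pow_eq_smul_of_mul_eq_smul h, smul_smul, smul_eq_mul]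

end LeftEigenvector

theorem integral_s_exp_laplacian_general (A : Type*) [NormedAddCommGroup A] [NormedSpace ℝ A]
    [FiniteDimensional ℝ A]
    (d s π : A →L[ℝ] A)
    (hds : d * s + s * d = 1 - π)
    (hsπ : s * π = 0) :
    MeasureTheory.IntegrableOn
        (fun t : ℝ => s * NormedSpace.exp (-(t • (d * s + s * d)))) (Set.Ioi 0) ∧
      ∫ t in Set.Ioi (0 : ℝ), s * NormedSpace.exp (-(t • (d * s + s * d))) = s := by
  have hsΔ : s * (d * s + s * d) = s := by rw [hds, mul_sub, mul_one, hsπ, sub_zero]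
  have heat : ∀ t : ℝ, s * exp (-(t • (d * s + s * d))) = Real.exp (-t) • s := fun t => by
    rw [Real.exp_eq_exp_ℝ]
    exact mul_exp_eq_smul_of_mul_eq_smul (by rw [mul_neg, mul_smul_comm, hsΔ, neg_smul])
  simp only [heat]
  refine ⟨(integrableOn_exp_neg_Ioi 0).smul_const s, ?_⟩
  rw [integral_smul_const, integral_exp_neg_Ioi_zero, one_smul]

/-- The improper integral `∫₀^∞ s ∘ exp(−tΔ) dt` converges and equals `s`,
where `Δ := ds + sd` is the Laplacian of an abstract Hodge decomposition on a
finite-dimensional space. -/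
theorem integral_s_exp_laplacian (A : Type*) [NormedAddCommGroup A] [NormedSpace ℝ A]
    [FiniteDimensional ℝ A]
    (d s π : A →L[ℝ] A)
    (hd : d * d = 0)
    (hds : d * s + s * d = 1 - π)
    (hs : s * s = 0)
    (hπ : π * π = π)
    (hdπ : d * π = 0) (hπd : π * d = 0)
    (hπs : π * s = 0) (hsπ : s * π = 0) :
    MeasureTheory.IntegrableOn
        (fun t : ℝ => s * NormedSpace.exp (-(t • (d * s + s * d)))) (Set.Ioi 0) ∧
      ∫ t in Set.Ioi (0 : ℝ), s * NormedSpace.exp (-(t • (d * s + s * d))) = s :=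
  integral_s_exp_laplacian_general A d s π hds hsπ
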